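/- arXiv:2506.10497 — 2 statements merged into one kernel-verified Lean document; each statement's English description precedes it below -/
import Mathlib

section
/- Let a, σ ∈ ℝ, let k ∈ ℕ, set c = (k + 1/2)·π and λ = a − c². Define f : ℝ → ℝ by f(x) = (σ/c)·(1 − x)·sin(c·x). Then f''(x) + a·f(x) = λ·f(x) − 2·σ·cos(c·x) for all x ∈ ℝ, and f(1) = 0 and f'(0) = σ. -/
lemma aux_hasDeriv1 (b c : ℝ) (x : ℝ) :
    HasDerivAt (fun y : ℝ => b * (1 - y) * Real.sin (c * y))
      (b * ((1 - x) * (c * Real.cos (c * x)) - Real.sin (c * x))) x := by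
  have h1 : HasDerivAt (fun y : ℝ => b * (1 - y)) (-b) x := by
    simpa using ((hasDerivAt_id x).const_sub 1).const_mul b
  have h2 : HasDerivAt (fun y : ℝ => Real.sin (c * y)) (c * Real.cos (c * x)) x := by
    simpa [mul_comm, Function.comp_def] using (Real.hasDerivAt_sin (c * x)).comp x
      ((hasDerivAt_id x).const_mul c)
  have := h1.mul h2
  exact this.congr_deriv (by ring)

lemma aux_hasDeriv2 (b c : ℝ) (x : ℝ) :
    HasDerivAt (fun y : ℝ => b * ((1 - y) * (c * Real.cos (c * y)) - Real.sin (c * y)))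
      (b * (-(2 * c * Real.cos (c * x)) - (1 - x) * c ^ 2 * Real.sin (c * x))) x := by
  have h1 : HasDerivAt (fun y : ℝ => (1 - y)) (-1 : ℝ) x := by
    simpa using ((hasDerivAt_id x).const_sub 1)
  have hcos : HasDerivAt (fun y : ℝ => Real.cos (c * y)) (c * (-Real.sin (c * x))) x := by
    simpa [mul_comm, Function.comp_def] using (Real.hasDerivAt_cos (c * x)).comp x
      ((hasDerivAt_id x).const_mul c)
  have h2 : HasDerivAt (fun y : ℝ => c * Real.cos (c * y))
      (c * (c * (-Real.sin (c * x)))) x := hcos.const_mul c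
  have hsin : HasDerivAt (fun y : ℝ => Real.sin (c * y)) (c * Real.cos (c * x)) x := by
    simpa [mul_comm, Function.comp_def] using (Real.hasDerivAt_sin (c * x)).comp x
      ((hasDerivAt_id x).const_mul c)
  have := ((h1.mul h2).sub hsin).const_mul b
  exact this.congr_deriv (by ring)

/-- `f(x) = (σ/c)(1−x) sin(cx)` with `c = (k+1/2)π` is a generalized-eigenvector profile:
it satisfies `f'' + a f = λ f − 2σ cos(cx)` with `λ = a − c²`, together with `f(1) = 0`
and `f'(0) = σ`. -/
theorem generalized_eigenvector_profile (a σ : ℝ) (k : ℕ) :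
    (∀ x : ℝ,
      deriv (deriv (fun y : ℝ => (σ / ((k + 1/2) * Real.pi)) * (1 - y) *
          Real.sin (((k + 1/2) * Real.pi) * y))) x
        + a * ((σ / ((k + 1/2) * Real.pi)) * (1 - x) * Real.sin (((k + 1/2) * Real.pi) * x))
      = (a - ((k + 1/2) * Real.pi) ^ 2) *
          ((σ / ((k + 1/2) * Real.pi)) * (1 - x) * Real.sin (((k + 1/2) * Real.pi) * x))
        - 2 * σ * Real.cos (((k + 1/2) * Real.pi) * x)) ∧
    (σ / ((k + 1/2) * Real.pi)) * (1 - (1:ℝ)) * Real.sin (((k + 1/2) * Real.pi) * 1) = 0 ∧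
    deriv (fun y : ℝ => (σ / ((k + 1/2) * Real.pi)) * (1 - y) *
        Real.sin (((k + 1/2) * Real.pi) * y)) 0 = σ := by
  set c : ℝ := (k + 1/2) * Real.pi with hc
  have hcpos : 0 < c := by
    apply mul_pos _ Real.pi_pos
    positivity
  have hcne : c ≠ 0 := ne_of_gt hcpos
  set b : ℝ := σ / c with hb
  have hd1 : deriv (fun y : ℝ => b * (1 - y) * Real.sin (c * y))
      = fun x => b * ((1 - x) * (c * Real.cos (c * x)) - Real.sin (c * x)) := by
    funext x; exact (aux_hasDeriv1 b c x).deriv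
  refine ⟨fun x => ?_, by simp, ?_⟩
  · rw [hd1]
    rw [(aux_hasDeriv2 b c x).deriv]
    have : b * c = σ := div_mul_cancel₀ σ hcne
    rw [← this]; ring
  · rw [hd1]
    have : b * c = σ := div_mul_cancel₀ σ hcne
    simp
    linarith
end

section
/- Let c ∈ ℝ. There exist a constant C > 0 and M₀ ∈ ℕ such that for every natural number m ≥ M₀ one has m²·π² − c > 0 and, setting ρₘ = √(m²·π² − c), the estimates |cos(ρₘ)| ≥ 1/2 and |sin(ρₘ·(1−x))| / (ρₘ·|cos(ρₘ)|) ≤ C/m hold for all x ∈ [0,1]. -/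
/-- Quantitative bound yielding `‖φ₂,ₘ¹‖_{L^∞} = O(1/m)`: for `m` large, setting
`ρₘ = √(m²π² − c)`, one has `|cos ρₘ| ≥ 1/2` and
`|sin(ρₘ(1−x))|/(ρₘ |cos ρₘ|) ≤ C/m` on `[0,1]`. -/
theorem eigenvector_first_component_bound (c : ℝ) :
    ∃ C > (0:ℝ), ∃ M₀ : ℕ, ∀ m : ℕ, M₀ ≤ m →
      0 < (m : ℝ) ^ 2 * Real.pi ^ 2 - c ∧
      1 / 2 ≤ |Real.cos (Real.sqrt ((m : ℝ) ^ 2 * Real.pi ^ 2 - c))| ∧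
      ∀ x ∈ Set.Icc (0:ℝ) 1,
        |Real.sin (Real.sqrt ((m : ℝ) ^ 2 * Real.pi ^ 2 - c) * (1 - x))| /
            (Real.sqrt ((m : ℝ) ^ 2 * Real.pi ^ 2 - c) *
              |Real.cos (Real.sqrt ((m : ℝ) ^ 2 * Real.pi ^ 2 - c))|)
          ≤ C / m := by
  refine ⟨2, by norm_num, ⌈|c|⌉₊ + 1, fun m hm => ?_⟩
  have hπ : (3:ℝ) < Real.pi := Real.pi_gt_three
  have hm1 : (1:ℝ) ≤ m := by
    have : 1 ≤ m := le_trans (Nat.le_add_left 1 _) hm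
    exact_mod_cast this
  have hcm : |c| ≤ m := by
    have h1 : (⌈|c|⌉₊ : ℝ) ≤ m := by
      exact_mod_cast le_trans (Nat.le_succ _) hm
    exact le_trans (Nat.le_ceil _) h1
  set a : ℝ := (m : ℝ) ^ 2 * Real.pi ^ 2 - c with ha_def
  have hπ2 : (9:ℝ) ≤ Real.pi ^ 2 := by nlinarith
  have ha4 : 4 * (m:ℝ)^2 ≤ a := by
    have hcc : c ≤ |c| := le_abs_self c
    nlinarith [sq_nonneg ((m:ℝ) - 1), mul_le_mul_of_nonneg_left hπ2 (sq_nonneg (m:ℝ))]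
  have ha : 0 < a := by nlinarith
  set ρ : ℝ := Real.sqrt a with hρ_def
  have hρ0 : 0 ≤ ρ := Real.sqrt_nonneg a
  have hρsq : ρ ^ 2 = a := Real.sq_sqrt ha.le
  have hρ2m : 2 * (m:ℝ) ≤ ρ := by nlinarith
  -- |ρ - mπ| ≤ 1/5
  have hsum : 5 * (m:ℝ) ≤ ρ + m * Real.pi := by nlinarith
  have hprod : (ρ - m * Real.pi) * (ρ + m * Real.pi) = -c := by
    have : ρ ^ 2 - ((m:ℝ) * Real.pi) ^ 2 = -c := by rw [hρsq]; ring
    nlinarith [this]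
  have habs : |ρ - m * Real.pi| * (ρ + m * Real.pi) = |c| := by
    have hpos : 0 < ρ + m * Real.pi := by nlinarith
    calc |ρ - m * Real.pi| * (ρ + m * Real.pi)
        = |(ρ - m * Real.pi) * (ρ + m * Real.pi)| := by
          rw [abs_mul, abs_of_pos hpos]
      _ = |(-c)| := by rw [hprod]
      _ = |c| := abs_neg c
  have hd : |ρ - m * Real.pi| ≤ 1/5 := by
    nlinarith [abs_nonneg (ρ - m * Real.pi)]
  -- |cos ρ - cos(mπ)| ≤ |ρ - mπ|
  have hcosdiff : |Real.cos ρ - Real.cos ((m:ℝ) * Real.pi)| ≤ |ρ - m * Real.pi| := by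
    rw [Real.cos_sub_cos]
    rw [abs_mul, abs_mul, abs_neg]
    have h1 : |Real.sin ((ρ + m * Real.pi) / 2)| ≤ 1 := Real.abs_sin_le_one _
    have h2 : |Real.sin ((ρ - m * Real.pi) / 2)| ≤ |(ρ - m * Real.pi) / 2| :=
      Real.abs_sin_le_abs
    have h3 : |(ρ - m * Real.pi) / 2| = |ρ - m * Real.pi| / 2 := by
      rw [abs_div]; norm_num
    calc |(2:ℝ)| * |Real.sin ((ρ + m * Real.pi) / 2)| * |Real.sin ((ρ - m * Real.pi) / 2)|
        ≤ 2 * 1 * (|ρ - m * Real.pi| / 2) := by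
          rw [abs_two]
          have h0 : (0:ℝ) ≤ |Real.sin ((ρ - m * Real.pi) / 2)| := abs_nonneg _
          gcongr
          · rw [← h3]; exact h2
      _ = |ρ - m * Real.pi| := by ring
  have hcosm : |Real.cos ((m:ℝ) * Real.pi)| = 1 := by
    have := Real.abs_cos_int_mul_pi (m : ℤ)
    simpa using this
  have hcos : 1/2 ≤ |Real.cos ρ| := by
    have := abs_sub_abs_le_abs_sub (Real.cos ((m:ℝ) * Real.pi)) (Real.cos ρ)
    rw [hcosm, abs_sub_comm] at this
    linarith
  refine ⟨ha, hcos, fun x _ => ?_⟩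
  have hm0 : (0:ℝ) < m := by linarith
  have hdenom : (m:ℝ) ≤ ρ * |Real.cos ρ| := by
    have h1 : (2 * (m:ℝ)) * (1/2) ≤ ρ * |Real.cos ρ| := by
      apply mul_le_mul hρ2m hcos (by norm_num) hρ0
    linarith
  have hsin : |Real.sin (ρ * (1 - x))| ≤ 1 := Real.abs_sin_le_one _
  calc |Real.sin (ρ * (1 - x))| / (ρ * |Real.cos ρ|)
      ≤ 1 / (m:ℝ) := by
        apply div_le_div₀ (by norm_num) hsin hm0 hdenom
    _ ≤ 2 / m := by
        gcongr; norm_num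
end
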